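/- Let (X,σ) be a magnetic graph with σ taking values in S¹_p, and X̂ its lift. Then the compression map 𝒞: AE(X̂) → AE_σ(X), (𝒞m)(u) = Σ_{ξ∈S¹_p} ξ m(u,ξ), is a contraction: ‖𝒞m‖_{AE_σ} ≤ ‖m‖_{AE} for all m ∈ AE(X̂). -/

import Mathlib

namespace MagneticGraph

variable {V : Type*}

/-- `σ` is a signature on `G`: unimodular on edges and conjugate-symmetric. -/
def IsSignature (G : SimpleGraph V) (σ : V → V → ℂ) : Prop :=
  ∀ u v, G.Adj u v → ‖σ u v‖ = 1 ∧ σ v u = starRingEnd ℂ (σ u v)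

/-- Product of the signature along (the darts of) a walk. -/
def sigProd {G : SimpleGraph V} (σ : V → V → ℂ) {u v : V} (w : G.Walk u v) : ℂ :=
  (w.darts.map fun d => σ d.toProd.1 d.toProd.2).prod

/-- `(X,σ)` is unbalanced: some directed cycle has signature product `≠ 1`. -/
def Unbalanced (G : SimpleGraph V) (σ : V → V → ℂ) : Prop :=
  ∃ (u : V) (w : G.Walk u u), w.IsCycle ∧ sigProd σ w ≠ 1

/-- `(X,σ)` is balanced: every directed cycle has signature product `1`. -/
def Balanced (G : SimpleGraph V) (σ : V → V → ℂ) : Prop :=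
  ∀ (u : V) (w : G.Walk u u), w.IsCycle → sigProd σ w = 1

/-- The σ-Lipschitz (semi)norm `max_{u∼v} |f(u) - σ_{uv} f(v)|`. -/
noncomputable def lipNorm (G : SimpleGraph V) (σ : V → V → ℂ) (f : V → ℂ) : ℝ :=
  sSup {r : ℝ | ∃ u v, G.Adj u v ∧ r = ‖f u - σ u v * f v‖}

/-- The magnetic atom `m^σ_{uv} = δ_u - σ_{uv} δ_v`. -/
def atom [DecidableEq V] (σ : V → V → ℂ) (u v : V) : V → ℂ :=
  fun w => (if w = u then (1 : ℂ) else 0) - σ u v * (if w = v then (1 : ℂ) else 0)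

/-- Membership in the magnetic Arens–Eells space: a finite linear combination of atoms. -/
def InAE [DecidableEq V] (G : SimpleGraph V) (σ : V → V → ℂ) (m : V → ℂ) : Prop :=
  ∃ (n : ℕ) (a : Fin n → ℂ) (p q : Fin n → V),
    (∀ i, G.Adj (p i) (q i)) ∧ m = ∑ i, a i • atom σ (p i) (q i)

/-- The magnetic Arens–Eells norm: infimum of `Σ|aᵢ|` over representations by atoms. -/
noncomputable def aeNorm [DecidableEq V] (G : SimpleGraph V) (σ : V → V → ℂ) (m : V → ℂ) : ℝ :=
  sInf {s : ℝ | ∃ (n : ℕ) (a : Fin n → ℂ) (p q : Fin n → V),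
    (∀ i, G.Adj (p i) (q i)) ∧ m = ∑ i, a i • atom σ (p i) (q i) ∧
    s = ∑ i, ‖a i‖}

/-- The lift graph of `(X,σ)` on vertex set `V × S¹_p`: `(u,ω) ∼ (v,ω')` iff
`u ∼ v` and `ω' = ω σ_{uv}`. -/
def liftGraph (G : SimpleGraph V) (σ : V → V → ℂ) (p : ℕ) :
    SimpleGraph (V × rootsOfUnity p ℂ) :=
  SimpleGraph.fromRel fun a b =>
    G.Adj a.1 b.1 ∧ ((b.2 : ℂˣ) : ℂ) = ((a.2 : ℂˣ) : ℂ) * σ a.1 b.1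

/-- The trivial signature. -/
def triv {W : Type*} : W → W → ℂ := fun _ _ => 1

/-- The compression map `(𝒞 m)(u) = Σ_{ξ ∈ S¹_p} ξ · m(u,ξ)`. -/
noncomputable def compress {V : Type*} (p : ℕ) [NeZero p] (m : V × rootsOfUnity p ℂ → ℂ) : V → ℂ :=
  fun u => haveI := Fintype.ofFinite (rootsOfUnity p ℂ); ∑ ξ : rootsOfUnity p ℂ, ((ξ : ℂˣ) : ℂ) * m (u, ξ)

/-!
Compression is linear and sends the atom of a lifted edge `(u, ω) ∼ (v, ω σ_{uv})` to
`ω • m^σ_{uv}`, a unimodular multiple of a magnetic atom. Hence every representation of `m` by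
classical atoms yields a representation of `𝒞 m` by magnetic atoms with the same cost.
-/

section ArensEells

variable {W : Type*} [DecidableEq V] [DecidableEq W]

lemma aeNorm_sum_smul_atom_le {G : SimpleGraph V} (σ : V → V → ℂ) {n : ℕ} (a : Fin n → ℂ)
    {p q : Fin n → V} (hadj : ∀ i, G.Adj (p i) (q i)) :
    aeNorm G σ (∑ i, a i • atom σ (p i) (q i)) ≤ ∑ i, ‖a i‖ := by
  refine csInf_le ⟨0, ?_⟩ ⟨n, a, p, q, hadj, rfl, rfl⟩
  rintro _ ⟨_, b, _, _, _, _, rfl⟩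
  positivity

lemma aeNorm_map_le {H : SimpleGraph W} {τ : W → W → ℂ} {G : SimpleGraph V} {σ : V → V → ℂ}
    (T : (W → ℂ) →ₗ[ℂ] (V → ℂ))
    (hT : ∀ a b, H.Adj a b →
      ∃ (c : ℂ) (u v : V), ‖c‖ ≤ 1 ∧ G.Adj u v ∧ T (atom τ a b) = c • atom σ u v)
    {m : W → ℂ} (hm : InAE H τ m) :
    aeNorm G σ (T m) ≤ aeNorm H τ m := by
  obtain ⟨n₀, a₀, p₀, q₀, hadj₀, hm₀⟩ := hm
  refine le_csInf ⟨_, n₀, a₀, p₀, q₀, hadj₀, hm₀, rfl⟩ ?_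
  rintro _ ⟨n, a, p, q, hadj, rfl, rfl⟩
  choose c u v hc hGadj hTatom using fun i => hT (p i) (q i) (hadj i)
  have hTm : T (∑ i, a i • atom τ (p i) (q i)) = ∑ i, (a i * c i) • atom σ (u i) (v i) := by
    simp only [map_sum, map_smul, hTatom, smul_smul]
  calc aeNorm G σ (T (∑ i, a i • atom τ (p i) (q i)))
      ≤ ∑ i, ‖a i * c i‖ := hTm ▸ aeNorm_sum_smul_atom_le σ _ hGadj
    _ ≤ ∑ i, ‖a i‖ := by
        gcongr with i
        rw [norm_mul]
        exact mul_le_of_le_one_right (norm_nonneg _) (hc i)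

end ArensEells

section Compression

variable (p : ℕ) [NeZero p]

noncomputable def compressₗ : (V × rootsOfUnity p ℂ → ℂ) →ₗ[ℂ] (V → ℂ) where
  toFun := compress p
  map_add' f g := by
    funext u
    simp only [compress, Pi.add_apply, mul_add, Finset.sum_add_distrib]
  map_smul' c f := by
    funext u
    simp only [compress, Pi.smul_apply, smul_eq_mul, RingHom.id_apply, Finset.mul_sum]
    exact Finset.sum_congr rfl fun _ _ => mul_left_comm _ _ _

variable [DecidableEq V]

lemma compress_atom_triv (u v : V) (ω ω' : rootsOfUnity p ℂ) :
    compress p (atom triv (u, ω) (v, ω')) =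
      Pi.single u ((ω : ℂˣ) : ℂ) - Pi.single v ((ω' : ℂˣ) : ℂ) := by
  funext w
  simp only [compress, atom, triv, Prod.mk.injEq, mul_sub, Finset.sum_sub_distrib,
    Pi.sub_apply, Pi.single_apply, mul_ite, mul_one, mul_zero, ite_and]
  split_ifs <;> simp

lemma single_sub_single_mul_eq_smul_atom (σ : V → V → ℂ) (u v : V) (ω : ℂ) :
    Pi.single u ω - Pi.single v (ω * σ u v) = ω • atom σ u v := by
  funext w
  simp only [Pi.sub_apply, Pi.single_apply, atom, Pi.smul_apply, smul_eq_mul]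
  split_ifs <;> ring

lemma exists_compress_atom_eq_smul_atom {G : SimpleGraph V} {σ : V → V → ℂ}
    {a b : V × rootsOfUnity p ℂ} (hab : (liftGraph G σ p).Adj a b) :
    ∃ (c : ℂ) (u v : V), ‖c‖ ≤ 1 ∧ G.Adj u v ∧ compress p (atom triv a b) = c • atom σ u v := by
  obtain ⟨u, ω⟩ := a
  obtain ⟨v, ω'⟩ := b
  have norm_root (ξ : rootsOfUnity p ℂ) : ‖((ξ : ℂˣ) : ℂ)‖ = 1 :=
    Complex.norm_eq_one_of_mem_rootsOfUnity ξ.prop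
  rw [compress_atom_triv]
  -- `fromRel` symmetrises: the lifting relation holds along `a → b` or along `b → a`.
  rcases ((SimpleGraph.fromRel_adj _ _ _).mp hab).2 with ⟨huv, hω'⟩ | ⟨hvu, hω⟩
  · refine ⟨_, u, v, (norm_root ω).le, huv, ?_⟩
    rw [hω', single_sub_single_mul_eq_smul_atom]
  · refine ⟨-_, v, u, (norm_neg _).trans_le (norm_root ω').le, hvu, ?_⟩
    rw [hω, neg_smul, ← single_sub_single_mul_eq_smul_atom, neg_sub]

end Compression

theorem stmt10_general {V : Type*} [DecidableEq V] (G : SimpleGraph V) (σ : V → V → ℂ)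
    (p : ℕ) [NeZero p]
    (m : V × rootsOfUnity p ℂ → ℂ) (hm : InAE (liftGraph G σ p) triv m) :
    aeNorm G σ (compress p m) ≤ aeNorm (liftGraph G σ p) triv m :=
  aeNorm_map_le (compressₗ p) (fun _ _ => exists_compress_atom_eq_smul_atom p) hm

/-- the compression map is a contraction:
`‖𝒞 m‖_{AE_σ} ≤ ‖m‖_{AE}` for every `m ∈ AE(X̂)`. -/
theorem stmt10 {V : Type*} [Fintype V] [DecidableEq V] (G : SimpleGraph V) (σ : V → V → ℂ)
    (p : ℕ) [NeZero p] (hσ : IsSignature G σ)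
    (hval : ∀ u v, G.Adj u v → σ u v ^ p = 1)
    (m : V × rootsOfUnity p ℂ → ℂ) (hm : InAE (liftGraph G σ p) triv m) :
    aeNorm G σ (compress p m) ≤ aeNorm (liftGraph G σ p) triv m :=
  stmt10_general G σ p m hm

end MagneticGraph
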